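/- Let V be a finite-dimensional complex inner product space, let H₁ and H₂ be self-adjoint linear operators on V, and let L ⊆ V be a nonzero subspace. Assume: (i) H₂ v = 0 for every v ∈ L; (ii) there is a real δ with ⟪v, H₂ v⟫ ≥ δ·‖v‖² for every v in the orthogonal complement L⊥; (iii) δ ≥ 2·‖H₁‖; and (iv) L is invariant under H₁. Then the smallest eigenvalue of H₁ + H₂ is at least the minimum of ⟪v, H₁ v⟫ over unit vectors v ∈ L, i.e. λ(H₁ + H₂) ≥ λ(H₁|_L). -/

import Mathlib

/-!
Write `v = a + b` with `a ∈ L` and `b ∈ Lᗮ`. Both `H₁` and `H₂` leave `L` invariant, hence, being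
self-adjoint, also `Lᗮ`, so the cross terms vanish and
`⟪v, (H₁ + H₂) v⟫ = ⟪a, H₁ a⟫ + ⟪b, H₁ b⟫ + ⟪b, H₂ b⟫ ≥ μ ‖a‖² + (δ - ‖H₁‖) ‖b‖² ≥ μ ‖v‖²`
for `μ = λ(H₁|_L)`, because `μ ≤ ‖H₁‖ ≤ δ - ‖H₁‖`.
-/

/-- The infimum of the Rayleigh quotient `re ⟪v, A v⟫` of the operator `A` over
unit vectors `v` in the set `S`.  For a self-adjoint operator on a nonzero
finite-dimensional complex inner product space and `S = Set.univ`, this is the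
smallest eigenvalue `λ(A)`; for a subspace `S = L`, this is `λ(A|_L)`. -/
noncomputable def rayleighInf {V : Type*} [NormedAddCommGroup V] [InnerProductSpace ℂ V]
    (A : V →L[ℂ] V) (S : Set V) : ℝ :=
  sInf ((fun v => (inner ℂ v (A v) : ℂ).re) '' {v | v ∈ S ∧ ‖v‖ = 1})

open RCLike

section QuadraticForm

variable {𝕜 V : Type*} [RCLike 𝕜] [NormedAddCommGroup V] [InnerProductSpace 𝕜 V]

local notation "⟪" x ", " y "⟫" => inner 𝕜 x y

theorem ContinuousLinearMap.abs_re_inner_apply_self_le (A : V →L[𝕜] V) (v : V) :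
    |re ⟪v, A v⟫| ≤ ‖A‖ * ‖v‖ ^ 2 :=
  calc |re ⟪v, A v⟫| ≤ ‖⟪v, A v⟫‖ := abs_re_le_norm _
    _ ≤ ‖v‖ * ‖A v‖ := norm_inner_le_norm _ _
    _ ≤ ‖v‖ * (‖A‖ * ‖v‖) := by gcongr; exact A.le_opNorm v
    _ = ‖A‖ * ‖v‖ ^ 2 := by ring

theorem LinearMap.IsSymmetric.inner_add_apply_add_of_mem_orthogonal {T : V →ₗ[𝕜] V}
    (hT : T.IsSymmetric) {L : Submodule 𝕜 V} (hinv : ∀ v ∈ L, T v ∈ L) {a b : V}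
    (ha : a ∈ L) (hb : b ∈ Lᗮ) :
    ⟪a + b, T (a + b)⟫ = ⟪a, T a⟫ + ⟪b, T b⟫ := by
  have hab : ⟪a, T b⟫ = 0 := by
    rw [← hT a b]
    exact Submodule.inner_right_of_mem_orthogonal (hinv a ha) hb
  have hba : ⟪b, T a⟫ = 0 := Submodule.inner_left_of_mem_orthogonal (hinv a ha) hb
  simp only [map_add, inner_add_left, inner_add_right, hab, hba]
  ring

theorem mul_norm_sq_le_re_inner_add_apply_self {L : Submodule 𝕜 V} [L.HasOrthogonalProjection]
    {H₁ H₂ : V →L[𝕜] V} (hH₁ : (H₁ : V →ₗ[𝕜] V).IsSymmetric)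
    (hH₂ : (H₂ : V →ₗ[𝕜] V).IsSymmetric) (hker : ∀ v ∈ L, H₂ v = 0) {δ μ : ℝ}
    (hgap : ∀ v ∈ Lᗮ, δ * ‖v‖ ^ 2 ≤ re ⟪v, H₂ v⟫) (hδ : 2 * ‖H₁‖ ≤ δ)
    (hinv : ∀ v ∈ L, H₁ v ∈ L) (hμ : μ ≤ ‖H₁‖) (hμL : ∀ v ∈ L, μ * ‖v‖ ^ 2 ≤ re ⟪v, H₁ v⟫)
    (v : V) : μ * ‖v‖ ^ 2 ≤ re ⟪v, (H₁ + H₂) v⟫ := by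
  obtain ⟨a, ha, b, hb, rfl⟩ := L.exists_add_mem_mem_orthogonal v
  have hnorm : ‖a + b‖ ^ 2 = ‖a‖ ^ 2 + ‖b‖ ^ 2 := by
    simpa only [sq] using norm_add_sq_eq_norm_sq_add_norm_sq_of_inner_eq_zero a b
      (Submodule.inner_right_of_mem_orthogonal ha hb)
  have h₁ := hH₁.inner_add_apply_add_of_mem_orthogonal hinv ha hb
  have h₂ := hH₂.inner_add_apply_add_of_mem_orthogonal (fun v hv => by simp [hker v hv]) ha hb
  simp only [ContinuousLinearMap.coe_coe] at h₁ h₂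
  have hsplit : re ⟪a + b, (H₁ + H₂) (a + b)⟫ = re ⟪a, H₁ a⟫ + re ⟪b, H₁ b⟫ + re ⟪b, H₂ b⟫ := by
    rw [add_apply, inner_add_right, h₁, h₂, hker a ha, inner_zero_right]
    simp only [map_add, map_zero]
    ring
  have hb₁ := (abs_le.mp (H₁.abs_re_inner_apply_self_le b)).1
  have hb₂ := hgap b hb
  have ha₁ := hμL a ha
  rw [hnorm, hsplit]
  nlinarith [sq_nonneg ‖b‖]

end QuadraticForm

section RayleighInf

variable {V : Type*} [NormedAddCommGroup V] [InnerProductSpace ℂ V]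

theorem rayleighInf_le (A : V →L[ℂ] V) {S : Set V} {v : V} (hv : v ∈ S) (hv1 : ‖v‖ = 1) :
    rayleighInf A S ≤ (inner ℂ v (A v)).re := by
  refine csInf_le ⟨-‖A‖, ?_⟩ ⟨v, ⟨hv, hv1⟩, rfl⟩
  rintro _ ⟨w, ⟨-, hw1⟩, rfl⟩
  simpa [hw1] using (abs_le.mp (A.abs_re_inner_apply_self_le w)).1

/-- `sInf ∅ = 0` makes this hold also when `S` contains no unit vector. -/
theorem rayleighInf_le_opNorm (A : V →L[ℂ] V) (S : Set V) : rayleighInf A S ≤ ‖A‖ := by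
  rcases Set.eq_empty_or_nonempty {v | v ∈ S ∧ ‖v‖ = 1} with h | ⟨v, hv, hv1⟩
  · rw [rayleighInf, h, Set.image_empty, Real.sInf_empty]
    exact norm_nonneg A
  · refine (rayleighInf_le A hv hv1).trans ?_
    simpa [hv1] using (abs_le.mp (A.abs_re_inner_apply_self_le v)).2

theorem rayleighInf_mul_norm_sq_le (A : V →L[ℂ] V) (L : Submodule ℂ V) {v : V} (hv : v ∈ L) :
    rayleighInf A L * ‖v‖ ^ 2 ≤ (inner ℂ v (A v)).re := by
  rcases eq_or_ne v 0 with rfl | hv0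
  · simp
  have hpos : 0 < ‖v‖ ^ 2 := by positivity
  have hunit : ‖((‖v‖⁻¹ : ℝ) : ℂ) • v‖ = 1 := by
    rw [norm_smul, Complex.norm_real, norm_inv, norm_norm, inv_mul_cancel₀ (norm_ne_zero_iff.2 hv0)]
  have h := rayleighInf_le A (L.smul_mem _ hv) hunit
  rwa [map_smul, inner_smul_left, inner_smul_right, Complex.conj_ofReal, ← mul_assoc,
    ← Complex.ofReal_mul, Complex.re_ofReal_mul, ← sq, inv_pow, inv_mul_eq_div,
    le_div_iff₀ hpos] at h

theorem rayleighInf_le_rayleighInf_univ {A B : V →L[ℂ] V} {S : Set V}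
    (h : ∀ v, rayleighInf A S * ‖v‖ ^ 2 ≤ (inner ℂ v (B v)).re) :
    rayleighInf A S ≤ rayleighInf B Set.univ := by
  by_cases hV : ∃ v : V, ‖v‖ = 1
  · obtain ⟨u, hu⟩ := hV
    refine le_csInf ⟨_, u, ⟨trivial, hu⟩, rfl⟩ ?_
    rintro _ ⟨v, ⟨-, hv1⟩, rfl⟩
    simpa [hv1] using h v
  · have hS : {v | v ∈ S ∧ ‖v‖ = 1} = ∅ :=
      Set.eq_empty_of_forall_notMem fun v hv => hV ⟨v, hv.2⟩
    have hU : {v | v ∈ (Set.univ : Set V) ∧ ‖v‖ = 1} = ∅ :=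
      Set.eq_empty_of_forall_notMem fun v hv => hV ⟨v, hv.2⟩
    rw [rayleighInf, rayleighInf, hS, hU, Set.image_empty, Set.image_empty]

end RayleighInf

theorem projection_lemma_lower_bound_general
    {V : Type*} [NormedAddCommGroup V] [InnerProductSpace ℂ V] [FiniteDimensional ℂ V]
    (H₁ H₂ : V →L[ℂ] V) (hH₁ : IsSelfAdjoint H₁) (hH₂ : IsSelfAdjoint H₂)
    (L : Submodule ℂ V)
    (hker : ∀ v ∈ L, H₂ v = 0)
    (δ : ℝ)
    (hgap : ∀ v ∈ Lᗮ, δ * ‖v‖ ^ 2 ≤ (inner ℂ v (H₂ v) : ℂ).re)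
    (hδ : 2 * ‖H₁‖ ≤ δ)
    (hinv : ∀ v ∈ L, H₁ v ∈ L) :
    rayleighInf H₁ (L : Set V) ≤ rayleighInf (H₁ + H₂) Set.univ :=
  rayleighInf_le_rayleighInf_univ fun v =>
    mul_norm_sq_le_re_inner_add_apply_self hH₁.isSymmetric hH₂.isSymmetric hker hgap hδ hinv
      (rayleighInf_le_opNorm H₁ L) (fun _ ha => rayleighInf_mul_norm_sq_le H₁ L ha) v

/-- Lower-bound half of the projection lemma (Appendix A of the paper):
`λ(H₁ + H₂) ≥ λ(H₁|_L)` when `H₂` annihilates `L`, penalizes `L⊥` by at least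
`δ ≥ 2‖H₁‖`, and `L` is `H₁`-invariant. -/
theorem projection_lemma_lower_bound
    {V : Type*} [NormedAddCommGroup V] [InnerProductSpace ℂ V] [FiniteDimensional ℂ V]
    (H₁ H₂ : V →L[ℂ] V) (hH₁ : IsSelfAdjoint H₁) (hH₂ : IsSelfAdjoint H₂)
    (L : Submodule ℂ V) (hL : L ≠ ⊥)
    (hker : ∀ v ∈ L, H₂ v = 0)
    (δ : ℝ)
    (hgap : ∀ v ∈ Lᗮ, δ * ‖v‖ ^ 2 ≤ (inner ℂ v (H₂ v) : ℂ).re)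
    (hδ : 2 * ‖H₁‖ ≤ δ)
    (hinv : ∀ v ∈ L, H₁ v ∈ L) :
    rayleighInf H₁ (L : Set V) ≤ rayleighInf (H₁ + H₂) Set.univ :=
  projection_lemma_lower_bound_general H₁ H₂ hH₁ hH₂ L hker δ hgap hδ hinv
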